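/- If a canonical linear-probing assignment can (induced by hash function h and arbitrary per-cell total priority orders) is linear, then it obeys the age rule on adjacent occupied cells: for any state q and keys u, v with can(q)[i] = some u and can(q)[i+1] = some v where h(v) ≠ i+1, it holds that rank(u, i) ≥ rank(v, i). -/

import Mathlib

/-- The rank of `v` at cell `i`: the cyclic distance `(i - h v) mod m`. -/
def rnk {U : Type*} {m : ℕ} (h : U → Fin m) (v : U) (i : Fin m) : ℕ :=
  ((i : ℕ) + m - (h v : ℕ)) % m

/-- Cyclic distance from `a` to `b`, going forward, modulo `m`. -/
def cdist {m : ℕ} (a b : Fin m) : ℕ :=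
  ((b : ℕ) + m - (a : ℕ)) % m

/-- A per-cell priority `p` extended to `Option U`: `none` is below everything. -/
def oGTp {U : Type*} {m : ℕ} (p : Fin m → U → U → Prop) (i : Fin m) :
    Option U → Option U → Prop
  | some a, some b => p i a b
  | some _, none => True
  | none, _ => False

/-- The generalized ordering invariant for linear probing with per-cell priorities `p`. -/
def GenInv {U : Type*} {m : ℕ} (p : Fin m → U → U → Prop) (h : U → Fin m)
    (A : Fin m → Option U) : Prop :=
  ∀ i v, A i = some v → ∀ j, cdist (h v) j < cdist (h v) i →
    oGTp p j (A j) (some v) ∨ A j = some v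

/-- The multiset of elements stored in the table `A` (counted with multiplicity). -/
def elemsOf {U : Type*} {m : ℕ} (A : Fin m → Option U) : Multiset U :=
  ((List.ofFn A).filterMap id : List U)

/-!
Suppose `u` at cell `i` and `v` at cell `i + 1` form an inversion: `v` is away from home and
`rank(u, i) < rank(v, i)`, so `v` is not at home at `i` either. Linearity pins down the tables
obtained by deletions: deleting `u` moves `v` back onto `i`; the key `w` then in front of `v` sat at
`i - 1` already in `can q`; and deleting `w` instead leaves `u` at `i - 1` and `v` at `i`. This is
again an inversion, in a smaller table, with the rank of `u` lowered by one. When that rank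
reaches `0`, `u` sits at `h u - 1`, the last cell of its probe sequence, so by the ordering
invariant every cell is occupied; but a table storing fewer than `m` keys has an empty cell.
-/

section CyclicDistance

theorem cdist_eq_val_sub {m : ℕ} (a b : Fin m) : cdist a b = (b - a : Fin m).val := by
  rw [cdist, Fin.sub_def]
  congr 1
  omega

theorem cdist_lt {m : ℕ} (a b : Fin m) : cdist a b < m :=
  cdist_eq_val_sub a b ▸ (b - a).isLt

variable {m : ℕ} [NeZero m]

theorem cdist_injective (a : Fin m) : Function.Injective (cdist a) := fun b c hbc => by
  rw [cdist_eq_val_sub, cdist_eq_val_sub] at hbc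
  exact sub_left_injective (Fin.val_injective hbc)

theorem cdist_eq_zero_iff {a b : Fin m} : cdist a b = 0 ↔ a = b := by
  rw [cdist_eq_val_sub, Fin.val_eq_zero_iff, sub_eq_zero, eq_comm]

theorem cdist_sub_one_add_one {a b : Fin m} (hab : a ≠ b) : cdist a (b - 1) + 1 = cdist a b := by
  obtain ⟨n, rfl⟩ : ∃ n, m = n + 1 := Nat.exists_eq_add_one_of_ne_zero (NeZero.ne m)
  have hba : b - a ≠ 0 := sub_ne_zero.mpr hab.symm
  rw [cdist_eq_val_sub, cdist_eq_val_sub, sub_right_comm, Fin.coe_sub_one, if_neg hba]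
  have := Fin.pos_iff_ne_zero.mpr hba
  omega

theorem cdist_sub_one_self (a : Fin m) : cdist a (a - 1) = m - 1 := by
  obtain ⟨n, rfl⟩ : ∃ n, m = n + 1 := Nat.exists_eq_add_one_of_ne_zero (NeZero.ne m)
  rw [cdist_eq_val_sub, sub_sub_cancel_left, Fin.coe_neg_one, Nat.add_sub_cancel]

theorem eq_or_eq_add_one_of_cdist_le_one {a b : Fin m} (hab : cdist a b ≤ 1) :
    b = a ∨ b = a + 1 := by
  by_cases hba : a = b
  · exact Or.inl hba.symm
  · right
    have := cdist_sub_one_add_one hba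
    rw [cdist_eq_zero_iff.mp (by omega : cdist a (b - 1) = 0), sub_add_cancel]

theorem cdist_lt_cdist_sub_one_self {a b : Fin m} (hb : b ≠ a - 1) :
    cdist a b < cdist a (a - 1) := by
  have hne : cdist a b ≠ cdist a (a - 1) := (cdist_injective a).ne hb
  have := cdist_lt a b
  rw [cdist_sub_one_self] at hne ⊢
  omega

end CyclicDistance

section StoredElements

variable {U : Type*} {m : ℕ}

theorem mem_elemsOf {A : Fin m → Option U} {a : U} : a ∈ elemsOf A ↔ ∃ i, A i = some a := by
  simp [elemsOf, List.mem_filterMap, List.mem_ofFn]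

theorem eq_of_nodup_elemsOf {A : Fin m → Option U} (hA : (elemsOf A).Nodup) {i j : Fin m}
    {a : U} (hi : A i = some a) (hj : A j = some a) : i = j := by
  have hpair := List.pairwise_ofFn.mp (List.pairwise_filterMap.mp (Multiset.coe_nodup.mp hA))
  by_contra hij
  rcases lt_or_gt_of_ne hij with hlt | hlt
  · exact hpair hlt a hi a hj rfl
  · exact hpair hlt a hj a hi rfl

theorem exists_eq_none_of_card_elemsOf_lt {A : Fin m → Option U}
    (hA : Multiset.card (elemsOf A) < m) : ∃ j, A j = none := by
  have hlt : ((List.ofFn A).filterMap id).length < (List.ofFn A).length := by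
    simpa [elemsOf] using hA
  obtain ⟨o, ho, hnone⟩ := List.length_filterMap_lt_length_iff_exists.mp hlt
  obtain ⟨j, rfl⟩ := List.mem_ofFn.mp ho
  exact ⟨j, hnone⟩

end StoredElements

namespace GenInv

variable {U : Type*} {m : ℕ} {p : Fin m → U → U → Prop} {h : U → Fin m}
  {A : Fin m → Option U}

theorem ne_none_of_cdist_lt (hA : GenInv p h A) {i j : Fin m} {v : U} (hv : A i = some v)
    (hj : cdist (h v) j < cdist (h v) i) : A j ≠ none := by
  intro hnone
  rcases hA i v hv j hj with hgt | heq
  · rwa [hnone] at hgt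
  · simp [hnone] at heq

theorem ne_some_of_eq_none [NeZero m] (hA : GenInv p h A) {j : Fin m} (hj : A j = none) (u : U) :
    A (h u - 1) ≠ some u := fun hu =>
  hA.ne_none_of_cdist_lt hu (cdist_lt_cdist_sub_one_self fun hju => by simp [hju, hu] at hj) hj

end GenInv

structure IsLinearCanonical {U : Type*} [DecidableEq U] {m : ℕ} (p : Fin m → U → U → Prop)
    (h : U → Fin m) (can : Finset U → Fin m → Option U) : Prop where
  genInv : ∀ q : Finset U, q.card + 1 ≤ m → GenInv p h (can q)
  elemsOf_eq : ∀ q : Finset U, q.card + 1 ≤ m → elemsOf (can q) = q.val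
  linear : ∀ (q : Finset U) (v : U), v ∉ q → q.card + 2 ≤ m →
    ∀ v' ∈ q, ∀ i j : Fin m,
      can q i = some v' → can (insert v q) j = some v' → cdist i j ≤ 1

theorem card_erase_add_one_le_of_le {U : Type*} [DecidableEq U] {m : ℕ} {q : Finset U}
    (hq : q.card + 1 ≤ m) (x : U) : (q.erase x).card + 1 ≤ m :=
  (Nat.add_le_add_right Finset.card_erase_le 1).trans hq

namespace IsLinearCanonical

variable {U : Type*} [DecidableEq U] {m : ℕ} {p : Fin m → U → U → Prop}
  {h : U → Fin m} {can : Finset U → Fin m → Option U} {q : Finset U} {i j k : Fin m} {u v : U}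

theorem mem_iff (hc : IsLinearCanonical p h can) (hq : q.card + 1 ≤ m) :
    v ∈ q ↔ ∃ i, can q i = some v := by
  rw [← mem_elemsOf, hc.elemsOf_eq q hq, Finset.mem_val]

theorem mem_of_eq_some (hc : IsLinearCanonical p h can) (hq : q.card + 1 ≤ m)
    (hv : can q i = some v) : v ∈ q :=
  (hc.mem_iff hq).mpr ⟨i, hv⟩

theorem eq_of_eq_some (hc : IsLinearCanonical p h can) (hq : q.card + 1 ≤ m)
    (hi : can q i = some v) (hj : can q j = some v) : i = j :=
  eq_of_nodup_elemsOf (hc.elemsOf_eq q hq ▸ q.nodup) hi hj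

theorem exists_eq_none (hc : IsLinearCanonical p h can) (hq : q.card + 1 ≤ m) :
    ∃ j, can q j = none :=
  exists_eq_none_of_card_elemsOf_lt (by rw [hc.elemsOf_eq q hq]; exact hq)

variable [NeZero m]

theorem exists_sub_one_eq_some (hc : IsLinearCanonical p h can) (hq : q.card + 1 ≤ m)
    (hv : can q k = some v) (hk : h v ≠ k) : ∃ w, can q (k - 1) = some w ∧ w ≠ v := by
  have hlt : cdist (h v) (k - 1) < cdist (h v) k := by
    have := cdist_sub_one_add_one hk
    omega
  obtain ⟨w, hw⟩ := Option.ne_none_iff_exists'.mp ((hc.genInv q hq).ne_none_of_cdist_lt hv hlt)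
  refine ⟨w, hw, ?_⟩
  rintro rfl
  exact hlt.ne (congrArg _ (hc.eq_of_eq_some hq hw hv))

theorem eq_or_eq_add_one (hc : IsLinearCanonical p h can) (hq : q.card + 1 ≤ m) {x : U}
    (hx : x ∈ q) (hj : can (q.erase x) j = some v) (hk : can q k = some v) :
    k = j ∨ k = j + 1 := by
  have hcard : (q.erase x).card + 2 ≤ m := by
    have := Finset.card_erase_add_one hx
    omega
  have hvq : v ∈ q.erase x := hc.mem_of_eq_some (card_erase_add_one_le_of_le hq x) hj
  have hle := hc.linear (q.erase x) x (Finset.notMem_erase x q) hcard v hvq j k hj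
    (by rwa [Finset.insert_erase hx])
  exact eq_or_eq_add_one_of_cdist_le_one hle

theorem erase_eq_some_of_adjacent (hc : IsLinearCanonical p h can) (hq : q.card + 1 ≤ m)
    (hu : can q i = some u) (hv : can q (i + 1) = some v) (huv : u ≠ v) (hvi : h v ≠ i + 1) :
    can (q.erase u) i = some v := by
  have hq' := card_erase_add_one_le_of_le hq u
  have hum : u ∈ q := hc.mem_of_eq_some hq hu
  obtain ⟨j, hj⟩ :=
    (hc.mem_iff hq').mp (Finset.mem_erase.mpr ⟨huv.symm, hc.mem_of_eq_some hq hv⟩)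
  rcases hc.eq_or_eq_add_one hq hum hj hv with rfl | hji
  · -- `v` would be away from home, so the key `y` before it would have to move onto `u` or `v`
    -- when `u` is inserted.
    obtain ⟨y, hy, hyv⟩ := hc.exists_sub_one_eq_some hq' hj hvi
    rw [add_sub_cancel_right] at hy
    obtain ⟨hyu, hyq⟩ := Finset.mem_erase.mp (hc.mem_of_eq_some hq' hy)
    obtain ⟨k, hk⟩ := (hc.mem_iff hq).mp hyq
    rcases hc.eq_or_eq_add_one hq hum hy hk with rfl | rfl
    · exact absurd (Option.some.inj (hk.symm.trans hu)) hyu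
    · exact absurd (Option.some.inj (hk.symm.trans hv)) hyv
  · rwa [add_right_cancel hji]

theorem exists_erase_shift (hc : IsLinearCanonical p h can) (hq : q.card + 1 ≤ m)
    (hu : can q i = some u) (hv : can q (i + 1) = some v) (hvi₁ : h v ≠ i + 1)
    (hlt : cdist (h u) i < cdist (h v) i) :
    ∃ w ∈ q, can (q.erase w) (i - 1) = some u ∧ can (q.erase w) i = some v := by
  have huv : u ≠ v := by
    rintro rfl
    exact hlt.false
  have hvi : h v ≠ i := by
    rintro rfl
    simp [cdist_eq_zero_iff.mpr rfl] at hlt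
  have hum : u ∈ q := hc.mem_of_eq_some hq hu
  have hq' := card_erase_add_one_le_of_le hq u
  have hv' := hc.erase_eq_some_of_adjacent hq hu hv huv hvi₁
  obtain ⟨w, hw', hwv⟩ := hc.exists_sub_one_eq_some hq' hv' hvi
  obtain ⟨hwu, hwq⟩ := Finset.mem_erase.mp (hc.mem_of_eq_some hq' hw')
  have hw : can q (i - 1) = some w := by
    obtain ⟨k, hk⟩ := (hc.mem_iff hq).mp hwq
    rcases hc.eq_or_eq_add_one hq hum hw' hk with rfl | rfl
    · exact hk
    · rw [sub_add_cancel] at hk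
      exact absurd (Option.some.inj (hk.symm.trans hu)) hwu
  have hvt : can ((q.erase w).erase u) (i - 1) = some v := by
    rw [Finset.erase_right_comm]
    exact hc.erase_eq_some_of_adjacent hq' hw' (by rwa [sub_add_cancel]) hwv
      (by rwa [sub_add_cancel])
  have hr := card_erase_add_one_le_of_le hq w
  have hur : u ∈ q.erase w := Finset.mem_erase.mpr ⟨hwu.symm, hum⟩
  refine ⟨w, hwq, ?_⟩
  obtain ⟨j, hj⟩ :=
    (hc.mem_iff hr).mp (Finset.mem_erase.mpr ⟨hwv.symm, hc.mem_of_eq_some hq hv⟩)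
  have hvr : can (q.erase w) i = some v := by
    rcases hc.eq_or_eq_add_one hr hur hvt hj with rfl | rfl
    · -- `v` would then sit at `i - 1` or at `i` in `can q`, but these cells hold `w` and `u`.
      rcases hc.eq_or_eq_add_one hq hwq hj hv with hi | hi
      · exact absurd (Option.some.inj (hw.symm.trans (hi ▸ hv))) hwv
      · rw [sub_add_cancel] at hi
        exact absurd (Option.some.inj (hu.symm.trans (hi ▸ hv))) huv
    · rwa [sub_add_cancel] at hj
  obtain ⟨k, hk⟩ := (hc.mem_iff hr).mp hur
  refine ⟨?_, hvr⟩
  rcases hc.eq_or_eq_add_one hq hwq hk hu with rfl | hik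
  · exact absurd (Option.some.inj (hk.symm.trans hvr)) huv
  · rwa [← eq_sub_of_add_eq hik.symm]

theorem cdist_le_of_adjacent (hc : IsLinearCanonical p h can) (hq : q.card + 1 ≤ m)
    (hu : can q i = some u) (hv : can q (i + 1) = some v) (hvi₁ : h v ≠ i + 1) :
    cdist (h v) i ≤ cdist (h u) i := by
  obtain ⟨n, hn⟩ : ∃ n, cdist (h u) i = n := ⟨_, rfl⟩
  rw [hn]
  induction n generalizing q i with
  | zero =>
    by_contra! hlt
    obtain ⟨w, -, hur, -⟩ := hc.exists_erase_shift hq hu hv hvi₁ (by omega)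
    obtain ⟨j, hj⟩ := hc.exists_eq_none (card_erase_add_one_le_of_le hq w)
    rw [← cdist_eq_zero_iff.mp hn] at hur
    exact (hc.genInv _ (card_erase_add_one_le_of_le hq w)).ne_some_of_eq_none hj u hur
  | succ n ih =>
    by_contra! hlt
    obtain ⟨w, -, hur, hvr⟩ := hc.exists_erase_shift hq hu hv hvi₁ (by omega)
    have hui : h u ≠ i := by
      rintro rfl
      simp [cdist_eq_zero_iff.mpr rfl] at hn
    have hvi : h v ≠ i := by
      rintro rfl
      simp [cdist_eq_zero_iff.mpr rfl] at hlt
    have hprev := ih (card_erase_add_one_le_of_le hq w) hur (by rwa [sub_add_cancel])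
      (by rwa [sub_add_cancel]) (by have := cdist_sub_one_add_one hui; omega)
    have := cdist_sub_one_add_one hvi
    omega

end IsLinearCanonical

theorem stmt19_general {U : Type*} [DecidableEq U] {m : ℕ} [NeZero m]
    (h : U → Fin m) (p : Fin m → U → U → Prop)
    -- the canonical assignment induced by h and the priorities p
    (can : Finset U → Fin m → Option U)
    (hcanInv : ∀ q : Finset U, q.card + 1 ≤ m → GenInv p h (can q))
    (hcanStore : ∀ q : Finset U, q.card + 1 ≤ m → elemsOf (can q) = q.val)
    -- linearity: upon insertion, every element moves forward by at most one cell
    (hlinear : ∀ (q : Finset U) (v : U), v ∉ q → q.card + 2 ≤ m →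
      ∀ v' ∈ q, ∀ i j : Fin m,
        can q i = some v' → can (insert v q) j = some v' → cdist i j ≤ 1) :
    -- conclusion: the age rule on adjacent occupied cells
    ∀ q : Finset U, q.card + 1 ≤ m → ∀ (i : Fin m) (u v : U),
      can q i = some u → can q (i + 1) = some v → h v ≠ i + 1 →
      rnk h v i ≤ rnk h u i := fun _ hq _ _ _ hu hv hvi =>
  IsLinearCanonical.cdist_le_of_adjacent ⟨hcanInv, hcanStore, hlinear⟩ hq hu hv hvi

theorem stmt19 {U : Type*} [DecidableEq U] {m : ℕ} [NeZero m]
    (h : U → Fin m) (p : Fin m → U → U → Prop)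
    -- each p i is a strict total order on U
    (hirr : ∀ i : Fin m, ∀ a : U, ¬ p i a a)
    (htrans : ∀ i : Fin m, ∀ a b c : U, p i a b → p i b c → p i a c)
    (htotal : ∀ i : Fin m, ∀ a b : U, a ≠ b → p i a b ∨ p i b a)
    -- the canonical assignment induced by h and the priorities p
    (can : Finset U → Fin m → Option U)
    (hcanInv : ∀ q : Finset U, q.card + 1 ≤ m → GenInv p h (can q))
    (hcanStore : ∀ q : Finset U, q.card + 1 ≤ m → elemsOf (can q) = q.val)
    -- linearity: upon insertion, every element moves forward by at most one cell
    (hlinear : ∀ (q : Finset U) (v : U), v ∉ q → q.card + 2 ≤ m →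
      ∀ v' ∈ q, ∀ i j : Fin m,
        can q i = some v' → can (insert v q) j = some v' → cdist i j ≤ 1) :
    -- conclusion: the age rule on adjacent occupied cells
    ∀ q : Finset U, q.card + 1 ≤ m → ∀ (i : Fin m) (u v : U),
      can q i = some u → can q (i + 1) = some v → h v ≠ i + 1 →
      rnk h v i ≤ rnk h u i :=
  stmt19_general h p can hcanInv hcanStore hlinear
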